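/- arXiv:2506.05919 — 3 statements merged into one kernel-verified Lean document; each statement's English description precedes it below -/
import Mathlib

section
/- If X and Y are independent random variables with X exponentially distributed with rate 1/s (i.e., density (1/s)·exp(−x/s) on x ≥ 0), s > 0, and Y gamma-distributed with shape D > 0 and scale θ > 0, then for all x ≥ 0, P( X/(Y+1) ≤ x ) = 1 − exp(−x/s)·(1 + θx/s)^{−D}. -/
open MeasureTheory ProbabilityTheory Real

/-- CDF of `X/(Y+1)` for `X ~ Exp(mean s)` and `Y ~ Gamma(shape D, scale θ)`
independent (Lemma 1 of the paper). -/
theorem cdf_exp_div_gamma_add_one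
    {Ω : Type*} [MeasurableSpace Ω] (μ : Measure Ω) [IsProbabilityMeasure μ]
    (X Y : Ω → ℝ) (hX : Measurable X) (hY : Measurable Y)
    (hind : IndepFun X Y μ)
    (s D θ : ℝ) (hs : 0 < s) (hD : 0 < D) (hθ : 0 < θ)
    (hXd : Measure.map X μ = expMeasure (1 / s))
    (hYd : Measure.map Y μ = gammaMeasure D (1 / θ))
    (x : ℝ) (hx : 0 ≤ x) :
    (μ {ω | X ω / (Y ω + 1) ≤ x}).toReal
      = 1 - Real.exp (-x / s) * (1 + θ * x / s) ^ (-D) := by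
  have hr0 : (0:ℝ) < 1/θ := by positivity
  have hrs : (0:ℝ) < 1/s := by positivity
  set r' : ℝ := 1/θ + x/s with hr'def
  have hr' : 0 < r' := by positivity
  haveI : IsProbabilityMeasure (expMeasure (1/s)) := isProbabilityMeasure_expMeasure hrs
  haveI : IsProbabilityMeasure (gammaMeasure D (1/θ)) := isProbabilityMeasure_gammaMeasure hD hr0
  -- Y is a.s. nonnegative
  have hY0 : ∀ᵐ ω ∂μ, 0 ≤ Y ω := by
    rw [ae_iff]
    have h1 : {ω | ¬ 0 ≤ Y ω} = Y ⁻¹' (Set.Iio 0) := by ext ω; simp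
    rw [h1, ← Measure.map_apply hY measurableSet_Iio, hYd, gammaMeasure,
      withDensity_apply _ measurableSet_Iio]
    exact lintegral_gammaPDF_of_nonpos le_rfl
  -- rewrite the event
  have hset : μ {ω | X ω / (Y ω + 1) ≤ x} = μ {ω | X ω ≤ x * (Y ω + 1)} := by
    apply measure_congr
    rw [Filter.eventuallyEq_set]
    filter_upwards [hY0] with ω hω
    have h1 : 0 < Y ω + 1 := by linarith
    simp only [Set.mem_setOf_eq, div_le_iff₀ h1]
  set S : Set (ℝ × ℝ) := {p : ℝ × ℝ | p.1 ≤ x * (p.2 + 1)} with hSdef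
  have hS : MeasurableSet S :=
    measurableSet_le measurable_fst ((measurable_snd.add_const 1).const_mul x)
  have hmap : μ {ω | X ω ≤ x * (Y ω + 1)}
      = ((expMeasure (1/s)).prod (gammaMeasure D (1/θ))) S := by
    rw [← hXd, ← hYd,
      ← (indepFun_iff_map_prod_eq_prod_map_map hX.aemeasurable hY.aemeasurable).mp hind,
      Measure.map_apply (hX.prodMk hY) hS]
    rfl
  set c : ℝ := Real.exp (-(x/s)) * ((1/θ)^D / r'^D) with hcdef
  have hcpos : 0 < c := by positivity
  have hc1 : c ≤ 1 := by
    have hxs : (0:ℝ) ≤ x/s := div_nonneg hx hs.le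
    have h1 : (1/θ:ℝ)^D ≤ r'^D := Real.rpow_le_rpow hr0.le (by rw [hr'def]; linarith) hD.le
    have h2 : ((1/θ:ℝ)^D / r'^D) ≤ 1 := by
      rw [div_le_one (Real.rpow_pos_of_pos hr' D)]; exact h1
    have h3 : Real.exp (-(x/s)) ≤ 1 := Real.exp_le_one_iff.mpr (neg_nonpos.mpr (by positivity))
    calc c ≤ 1 * 1 := by
            apply mul_le_mul h3 h2 (by positivity) (by norm_num)
      _ = 1 := by norm_num
  -- key real identity
  have hkey : ∀ y : ℝ, 0 ≤ y →
      c * gammaPDFReal D r' y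
        = gammaPDFReal D (1/θ) y * Real.exp (-(1/s * (x*(y+1)))) := by
    intro y hy
    rw [gammaPDFReal, gammaPDFReal, if_pos hy, if_pos hy]
    have hG : Real.Gamma D ≠ 0 := (Real.Gamma_pos_of_pos hD).ne'
    have h1 : (r':ℝ)^D ≠ 0 := (Real.rpow_pos_of_pos hr' D).ne'
    have hexp : Real.exp (-(x/s)) * Real.exp (-(r' * y))
        = Real.exp (-(1/θ * y)) * Real.exp (-(1/s * (x*(y+1)))) := by
      rw [← Real.exp_add, ← Real.exp_add]
      congr 1
      rw [hr'def]; field_simp; ring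
    calc c * (r'^D / Real.Gamma D * y^(D-1) * Real.exp (-(r'*y)))
        = ((1/θ)^D / r'^D * r'^D) / Real.Gamma D * y^(D-1) *
            (Real.exp (-(x/s)) * Real.exp (-(r'*y))) := by rw [hcdef]; ring
      _ = (1/θ)^D / Real.Gamma D * y^(D-1) *
            (Real.exp (-(1/θ*y)) * Real.exp (-(1/s*(x*(y+1))))) := by
            rw [hexp, div_mul_cancel₀ _ h1]
      _ = (1/θ)^D / Real.Gamma D * y^(D-1) * Real.exp (-(1/θ * y))
            * Real.exp (-(1/s * (x*(y+1)))) := by ring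
  -- pointwise identity in ℝ≥0∞
  have hpt : ∀ y : ℝ,
      gammaPDF D (1/θ) y *
        ENNReal.ofReal (if 0 ≤ x*(y+1) then 1 - Real.exp (-(1/s * (x*(y+1)))) else 0)
      = gammaPDF D (1/θ) y - ENNReal.ofReal c * gammaPDF D r' y := by
    intro y
    rcases lt_or_ge y 0 with hy | hy
    · rw [gammaPDF_of_neg hy, gammaPDF_of_neg hy]; simp
    · have hxy : 0 ≤ x*(y+1) := mul_nonneg hx (by linarith)
      have e1 : gammaPDF D (1/θ) y = ENNReal.ofReal (gammaPDFReal D (1/θ) y) := rfl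
      have e2 : gammaPDF D r' y = ENNReal.ofReal (gammaPDFReal D r' y) := rfl
      have hgne : 0 ≤ gammaPDFReal D (1/θ) y * Real.exp (-(1/s * (x*(y+1)))) :=
        mul_nonneg (gammaPDFReal_nonneg hD hr0 y) (Real.exp_pos _).le
      rw [e1, e2, if_pos hxy, ← ENNReal.ofReal_mul (gammaPDFReal_nonneg hD hr0 y),
        ← ENNReal.ofReal_mul hcpos.le, hkey y hy, ← ENNReal.ofReal_sub _ hgne]
      congr 1
      ring
  -- pointwise inequality
  have hle : ∀ y : ℝ, ENNReal.ofReal c * gammaPDF D r' y ≤ gammaPDF D (1/θ) y := by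
    intro y
    rcases lt_or_ge y 0 with hy | hy
    · rw [gammaPDF_of_neg hy, gammaPDF_of_neg hy]; simp
    · have hxy : 0 ≤ x*(y+1) := mul_nonneg hx (by linarith)
      have e1 : gammaPDF D (1/θ) y = ENNReal.ofReal (gammaPDFReal D (1/θ) y) := rfl
      have e2 : gammaPDF D r' y = ENNReal.ofReal (gammaPDFReal D r' y) := rfl
      rw [e1, e2, ← ENNReal.ofReal_mul hcpos.le, hkey y hy]
      apply ENNReal.ofReal_le_ofReal
      exact mul_le_of_le_one_right (gammaPDFReal_nonneg hD hr0 y)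
        (Real.exp_le_one_iff.mpr (neg_nonpos.mpr (mul_nonneg hrs.le hxy)))
  -- measurability facts
  have hmg : Measurable (gammaPDF D (1/θ)) := (measurable_gammaPDFReal D (1/θ)).ennreal_ofReal
  have hmg' : Measurable (gammaPDF D r') := (measurable_gammaPDFReal D r').ennreal_ofReal
  have hmf : Measurable (fun y : ℝ => ENNReal.ofReal
      (if 0 ≤ x*(y+1) then 1 - Real.exp (-(1/s * (x*(y+1)))) else 0)) := by
    apply Measurable.ennreal_ofReal
    apply Measurable.ite
    · exact measurableSet_le measurable_const ((measurable_id.add_const 1).const_mul x)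
    · exact (measurable_const.sub
        ((((measurable_id.add_const 1).const_mul x).const_mul (1/s)).neg.exp))
    · exact measurable_const
  -- compute the product measure
  have hprod : ((expMeasure (1/s)).prod (gammaMeasure D (1/θ))) S
      = 1 - ENNReal.ofReal c := by
    rw [Measure.prod_apply_symm hS]
    have hslice : ∀ y : ℝ, expMeasure (1/s) ((fun x' => (x', y)) ⁻¹' S)
        = ENNReal.ofReal (if 0 ≤ x*(y+1) then 1 - Real.exp (-(1/s * (x*(y+1)))) else 0) := by
      intro y
      have hpre : ((fun x' => (x', y)) ⁻¹' S) = Set.Iic (x*(y+1)) := rfl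
      rw [hpre]
      show gammaMeasure 1 (1/s) _ = _
      rw [gammaMeasure, withDensity_apply _ measurableSet_Iic]
      exact lintegral_exponentialPDF_eq_antiDeriv hrs _
    simp_rw [hslice]
    rw [gammaMeasure, lintegral_withDensity_eq_lintegral_mul _ hmg hmf]
    calc ∫⁻ y, (gammaPDF D (1/θ) * fun y => ENNReal.ofReal
          (if 0 ≤ x*(y+1) then 1 - Real.exp (-(1/s * (x*(y+1)))) else 0)) y
        = ∫⁻ y, (gammaPDF D (1/θ) y - ENNReal.ofReal c * gammaPDF D r' y) := by
          exact lintegral_congr fun y => hpt y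
      _ = (∫⁻ y, gammaPDF D (1/θ) y) - ∫⁻ y, ENNReal.ofReal c * gammaPDF D r' y := by
          apply lintegral_sub (hmg'.const_mul _)
          · rw [lintegral_const_mul _ hmg', lintegral_gammaPDF_eq_one hD hr']
            simp
          · exact ae_of_all _ hle
      _ = 1 - ENNReal.ofReal c := by
          rw [lintegral_const_mul _ hmg', lintegral_gammaPDF_eq_one hD hr0,
            lintegral_gammaPDF_eq_one hD hr', mul_one]
  have hc : c = Real.exp (-x/s) * (1 + θ*x/s)^(-D) := by
    have h1 : (0:ℝ) < 1 + θ*x/s := by positivity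
    have h2 : (1/θ)/r' = (1 + θ*x/s)⁻¹ := by
      rw [hr'def, inv_eq_one_div, div_eq_div_iff (by positivity) (by positivity)]
      field_simp
    rw [hcdef, neg_div]
    congr 1
    rw [← Real.div_rpow hr0.le hr'.le, h2, Real.inv_rpow h1.le, ← Real.rpow_neg h1.le]
  rw [hset, hmap, hprod, ENNReal.toReal_sub_of_le (ENNReal.ofReal_le_one.mpr hc1)
    ENNReal.one_ne_top, ENNReal.toReal_one, ENNReal.toReal_ofReal hcpos.le, hc]
end

section
/- Let Z ~ Gamma(N, θ_Z) with positive integer shape N, and L ~ Gamma(D, θ_L) with D > 0, independent. Then for x ≥ 0, P(Z/(L+1) ≤ x) = 1 − Σ_{m=0}^{N−1} Σ_{n=0}^{N−m−1} [θ_L^n θ_Z^{D−m} Γ(n+D) / (m! n! Γ(D))] · exp(−x/θ_Z) · x^{m+n} / (x θ_L + θ_Z)^{n+D}. -/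
open MeasureTheory ProbabilityTheory Real Finset

open scoped Nat

/-!
Conditioning on `L = l`, the event is `Z ≤ x (l + 1)`, whose probability is the Erlang CDF
`1 - e^{-c(l+1)} ∑_{m<N} (c(l+1))^m / m!` with `c = x / θZ`. Writing `c(l+1) = c + cl`, this
truncated Poisson sum is a Cauchy product over the triangle `p + n < N`, so averaging over `L`
only requires the moments `E[L^n e^{-cL}]`, which are again Gamma integrals.
-/

theorem exp_neg_mul_sum_range_pow_add_div_factorial (a b : ℝ) (N : ℕ) :
    exp (-(a + b)) * ∑ m ∈ range N, (a + b) ^ m / m ! =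
      ∑ p ∈ range N, ∑ n ∈ range (N - p),
        exp (-a) * (a ^ p / p !) * (exp (-b) * (b ^ n / n !)) := by
  rw [← sum_range_diag_flip, mul_sum]
  refine sum_congr rfl fun m _ => ?_
  rw [add_pow, sum_div, mul_sum]
  refine sum_congr rfl fun k hk => ?_
  rw [Nat.cast_choose ℝ (Nat.lt_succ_iff.mp (mem_range.mp hk)), neg_add, exp_add]
  field_simp

theorem hasDerivAt_exp_neg_mul_sum_range_pow_div_factorial (n : ℕ) (y : ℝ) :
    HasDerivAt (fun y => exp (-y) * ∑ m ∈ range (n + 1), y ^ m / m !)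
      (-(exp (-y) * (y ^ n / n !))) y := by
  induction n with
  | zero => simpa using (hasDerivAt_neg y).exp
  | succ n ih =>
    have hterm : HasDerivAt (fun y => exp (-y) * (y ^ (n + 1) / (n + 1)!))
        (-(exp (-y) * (y ^ (n + 1) / (n + 1)!)) + exp (-y) * (y ^ n / n !)) y := by
      refine ((hasDerivAt_neg y).exp.mul ((hasDerivAt_pow (n + 1) y).div_const _)).congr_deriv ?_
      rw [Nat.factorial_succ]
      push_cast
      field_simp
    simp only [sum_range_succ _ (n + 1), mul_add]
    exact (ih.add hterm).congr_deriv (by ring)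

theorem gammaPDFReal_natCast_succ (n : ℕ) (r : ℝ) {s : ℝ} (hs : 0 ≤ s) :
    gammaPDFReal (n + 1 : ℕ) r s = r * (exp (-(r * s)) * ((r * s) ^ n / n !)) := by
  rw [gammaPDFReal, if_pos hs, Nat.cast_succ, add_sub_cancel_right, rpow_natCast,
    Gamma_nat_eq_factorial, ← Nat.cast_succ, rpow_natCast, pow_succ, mul_pow]
  ring

theorem cdf_gammaMeasure_natCast {N : ℕ} (hN : N ≠ 0) {r : ℝ} (hr : 0 < r) {t : ℝ}
    (ht : 0 ≤ t) :
    cdf (gammaMeasure N r) t = 1 - exp (-(r * t)) * ∑ m ∈ range N, (r * t) ^ m / m ! := by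
  obtain ⟨n, rfl⟩ := Nat.exists_eq_add_one_of_ne_zero hN
  have hderiv : ∀ s ∈ Set.uIcc 0 t, HasDerivAt
      (fun s => -(exp (-(r * s)) * ∑ m ∈ range (n + 1), (r * s) ^ m / m !))
      (r * (exp (-(r * s)) * ((r * s) ^ n / n !))) s := fun s _ =>
    ((hasDerivAt_exp_neg_mul_sum_range_pow_div_factorial n (r * s)).comp s
      ((hasDerivAt_id s).const_mul r)).neg.congr_deriv (by simp [mul_comm])
  have hpdf : Set.EqOn (gammaPDFReal (n + 1 : ℕ) r)
      (fun s => r * (exp (-(r * s)) * ((r * s) ^ n / n !))) (Set.uIcc 0 t) :=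
    fun s hs => gammaPDFReal_natCast_succ n r (Set.uIcc_of_le ht ▸ hs).1
  rw [cdf_gammaMeasure_eq_integral (by positivity) hr,
    setIntegral_eq_of_subset_of_forall_sdiff_eq_zero (f := gammaPDFReal (n + 1 : ℕ) r)
      measurableSet_Iic Set.Icc_subset_Iic_self fun s hs => if_neg fun h => hs.2 ⟨h, hs.1⟩,
    integral_Icc_eq_integral_Ioc, ← intervalIntegral.integral_of_le ht,
    intervalIntegral.integral_congr hpdf,
    intervalIntegral.integral_eq_sub_of_hasDerivAt hderiv
      ((by fun_prop : Continuous _).intervalIntegrable _ _)]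
  simp [sum_range_succ', neg_add_eq_sub]

theorem measureReal_le_comp_eq_integral_cdf {Ω β : Type*} [MeasurableSpace Ω]
    [MeasurableSpace β] {μ : Measure Ω} [IsProbabilityMeasure μ] {Z : Ω → ℝ} {L : Ω → β}
    (hZ : Measurable Z) (hL : Measurable L) (hind : IndepFun Z L μ) {g : β → ℝ}
    (hg : Measurable g) :
    μ.real {ω | Z ω ≤ g (L ω)} = ∫ l, cdf (μ.map Z) (g l) ∂μ.map L := by
  have := Measure.isProbabilityMeasure_map (μ := μ) hZ.aemeasurable
  set S : Set (β × ℝ) := {p | p.2 ≤ g p.1}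
  have hS : MeasurableSet S := measurableSet_le measurable_snd (hg.comp measurable_fst)
  have hmap : μ.map (fun ω => (L ω, Z ω)) = (μ.map L).prod (μ.map Z) :=
    (indepFun_iff_map_prod_eq_prod_map_map hL.aemeasurable hZ.aemeasurable).mp hind.symm
  calc μ.real {ω | Z ω ≤ g (L ω)} = ((μ.map L).prod (μ.map Z)).real S := by
        rw [← hmap, map_measureReal_apply (hL.prodMk hZ) hS]
        rfl
    _ = ∫ l, (μ.map Z).real (Set.Iic (g l)) ∂μ.map L := by
        rw [measureReal_def, Measure.prod_apply hS, ← integral_toReal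
          (measurable_measure_prodMk_left hS).aemeasurable
          (ae_of_all _ fun _ => measure_lt_top _ _)]
        rfl
    _ = ∫ l, cdf (μ.map Z) (g l) ∂μ.map L := by simp only [cdf_eq_real]

theorem ae_nonneg_gammaMeasure (a r : ℝ) : ∀ᵐ l ∂gammaMeasure a r, 0 ≤ l := by
  simp only [ae_iff, not_le]
  exact (withDensity_apply _ measurableSet_Iio).trans (lintegral_gammaPDF_of_nonpos le_rfl)

theorem toReal_gammaPDF_smul {a r : ℝ} (ha : 0 < a) (hr : 0 < r) (g : ℝ → ℝ) :
    (fun l => (gammaPDF a r l).toReal • g l) = fun l => gammaPDFReal a r l * g l := by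
  simp [gammaPDF, ENNReal.toReal_ofReal (gammaPDFReal_nonneg ha hr _)]

theorem support_gammaPDFReal_mul_subset (a r : ℝ) (g : ℝ → ℝ) :
    Function.support (fun l => gammaPDFReal a r l * g l) ⊆ Set.Ici 0 := fun l hl => by
  by_contra h
  exact hl (by simp [gammaPDFReal, show ¬0 ≤ l from h])

theorem integrable_gammaMeasure_iff {a r : ℝ} (ha : 0 < a) (hr : 0 < r) {g : ℝ → ℝ} :
    Integrable g (gammaMeasure a r) ↔
      IntegrableOn (fun l => gammaPDFReal a r l * g l) (Set.Ioi 0) := by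
  rw [gammaMeasure, integrable_withDensity_iff_integrable_smul' (f := gammaPDF a r)
    (measurable_gammaPDFReal a r).ennreal_ofReal (ae_of_all _ fun _ => ENNReal.ofReal_lt_top),
    toReal_gammaPDF_smul ha hr,
    ← integrableOn_Ici_iff_integrableOn_Ioi,
    integrableOn_iff_integrable_of_support_subset (support_gammaPDFReal_mul_subset a r g)]

theorem integral_gammaMeasure {a r : ℝ} (ha : 0 < a) (hr : 0 < r) (g : ℝ → ℝ) :
    ∫ l, g l ∂gammaMeasure a r = ∫ l in Set.Ioi 0, gammaPDFReal a r l * g l := by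
  rw [gammaMeasure, integral_withDensity_eq_integral_toReal_smul (f := gammaPDF a r)
    (measurable_gammaPDFReal a r).ennreal_ofReal (ae_of_all _ fun _ => ENNReal.ofReal_lt_top),
    toReal_gammaPDF_smul ha hr, ← integral_Ici_eq_integral_Ioi,
    setIntegral_eq_integral_of_forall_compl_eq_zero fun l hl => ?_]
  exact Function.notMem_support.mp fun h => hl (support_gammaPDFReal_mul_subset a r g h)

theorem gammaPDFReal_mul_pow_mul_exp_neg_mul {a r c l : ℝ} (hl : 0 < l) (n : ℕ) :
    gammaPDFReal a r l * (l ^ n * exp (-(c * l)))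
      = r ^ a / Gamma a * (l ^ ((n + a : ℝ) - 1) * exp (-((r + c) * l))) := by
  rw [gammaPDFReal, if_pos hl.le, add_sub_assoc, rpow_add hl, rpow_natCast, add_mul, neg_add,
    exp_add]
  ring

theorem integral_pow_mul_exp_neg_mul_gammaMeasure {a r c : ℝ} (ha : 0 < a) (hr : 0 < r)
    (hrc : 0 < r + c) (n : ℕ) :
    ∫ l, l ^ n * exp (-(c * l)) ∂gammaMeasure a r
      = r ^ a / Gamma a * Gamma (n + a) / (r + c) ^ ((n : ℝ) + a) := by
  rw [integral_gammaMeasure ha hr, setIntegral_congr_fun measurableSet_Ioi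
      fun l hl => gammaPDFReal_mul_pow_mul_exp_neg_mul hl n, integral_const_mul,
    integral_rpow_mul_exp_neg_mul_Ioi (by positivity) hrc, one_div, inv_rpow hrc.le]
  ring

theorem integrable_pow_mul_exp_neg_mul_gammaMeasure {a r c : ℝ} (ha : 0 < a) (hr : 0 < r)
    (hrc : 0 < r + c) (n : ℕ) :
    Integrable (fun l => l ^ n * exp (-(c * l))) (gammaMeasure a r) := by
  refine (integrable_gammaMeasure_iff ha hr).mpr (.of_integral_ne_zero ?_)
  rw [← integral_gammaMeasure ha hr, integral_pow_mul_exp_neg_mul_gammaMeasure ha hr hrc]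
  have := Gamma_pos_of_pos ha
  positivity

theorem poisson_mul_gamma_moment_eq {θZ θL D x : ℝ} (hθZ : 0 < θZ) (hθL : 0 < θL)
    (hx : 0 ≤ x) (p n : ℕ) :
    exp (-(x / θZ)) * ((x / θZ) ^ p / p !) * ((x / θZ) ^ n / n !)
        * ((1 / θL) ^ D / Gamma D * Gamma (n + D) / (1 / θL + x / θZ) ^ ((n : ℝ) + D))
      = θL ^ n * θZ ^ (D - p) * Gamma (n + D) / ((p ! : ℝ) * n ! * Gamma D)
          * exp (-x / θZ) * x ^ (p + n) / (x * θL + θZ) ^ ((n : ℝ) + D) := by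
  have hsum : 1 / θL + x / θZ = (x * θL + θZ) / (θZ * θL) := by field_simp; ring
  have hZ : θZ ^ ((n : ℝ) + D) = θZ ^ (D - p) * θZ ^ (p + n) := by
    rw [← rpow_natCast, ← rpow_add hθZ]; push_cast; ring_nf
  have hL : θL ^ ((n : ℝ) + D) = θL ^ n * θL ^ D := by rw [rpow_add hθL, rpow_natCast]
  rw [hsum, div_rpow (by positivity : 0 ≤ x * θL + θZ) (by positivity : 0 ≤ θZ * θL),
    mul_rpow hθZ.le hθL.le, hZ, hL, div_rpow zero_le_one hθL.le, one_rpow, neg_div, div_pow,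
    div_pow, pow_add, pow_add]
  field_simp

/-- CDF of `Z/(L+1)` for independent `Z ~ Gamma(N, θZ)` (integer shape) and
`L ~ Gamma(D, θL)` (Lemma 2 of the paper). -/
theorem cdf_gamma_div_gamma_add_one
    {Ω : Type*} [MeasurableSpace Ω] (μ : Measure Ω) [IsProbabilityMeasure μ]
    (Z L : Ω → ℝ) (hZ : Measurable Z) (hL : Measurable L)
    (hind : IndepFun Z L μ)
    (N : ℕ) (hN : 1 ≤ N) (D θZ θL : ℝ) (hD : 0 < D) (hθZ : 0 < θZ) (hθL : 0 < θL)
    (hZd : Measure.map Z μ = gammaMeasure (N : ℝ) (1 / θZ))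
    (hLd : Measure.map L μ = gammaMeasure D (1 / θL))
    (x : ℝ) (hx : 0 ≤ x) :
    (μ {ω | Z ω / (L ω + 1) ≤ x}).toReal
      = 1 - ∑ m ∈ range N, ∑ n ∈ range (N - m),
          (θL ^ n * θZ ^ (D - m) * Real.Gamma (n + D)
              / ((m.factorial : ℝ) * n.factorial * Real.Gamma D))
            * Real.exp (-x / θZ) * x ^ (m + n) / (x * θL + θZ) ^ ((n : ℝ) + D) := by
  set c := x / θZ
  have hint (n : ℕ) : Integrable (fun l => l ^ n * exp (-(c * l))) (gammaMeasure D (1 / θL)) :=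
    integrable_pow_mul_exp_neg_mul_gammaMeasure hD (by positivity) (by positivity) n
  have := isProbabilityMeasure_gammaMeasure hD (one_div_pos.mpr hθL)
  have hevent : {ω | Z ω / (L ω + 1) ≤ x} =ᵐ[μ] {ω | Z ω ≤ x * (L ω + 1)} := by
    filter_upwards [ae_of_ae_map hL.aemeasurable (hLd ▸ ae_nonneg_gammaMeasure _ _)] with ω hω
    exact propext (div_le_iff₀ (by linarith))
  have hcdf : ∀ᵐ l ∂gammaMeasure D (1 / θL), cdf (gammaMeasure N (1 / θZ)) (x * (l + 1))
      = 1 - ∑ p ∈ range N, ∑ n ∈ range (N - p),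
          exp (-c) * (c ^ p / p !) * (c ^ n / n !) * (l ^ n * exp (-(c * l))) := by
    filter_upwards [ae_nonneg_gammaMeasure _ _] with l hl
    rw [cdf_gammaMeasure_natCast (by omega) (by positivity) (by positivity),
      show 1 / θZ * (x * (l + 1)) = c + c * l by ring, exp_neg_mul_sum_range_pow_add_div_factorial]
    congr 1
    exact sum_congr rfl fun p _ => sum_congr rfl fun n _ => by ring
  have hsum_int (p : ℕ) : Integrable (fun l => ∑ n ∈ range (N - p),
      exp (-c) * (c ^ p / p !) * (c ^ n / n !) * (l ^ n * exp (-(c * l)))) _ :=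
    integrable_finsetSum _ fun n _ => (hint n).const_mul _
  rw [← measureReal_def, measureReal_congr hevent, measureReal_le_comp_eq_integral_cdf hZ hL hind
      (g := fun l => x * (l + 1)) (by fun_prop), hZd, hLd, integral_congr_ae hcdf,
    integral_sub (integrable_const 1) (integrable_finsetSum _ fun p _ => hsum_int p),
    integral_const, probReal_univ, one_smul, integral_finsetSum _ fun p _ => hsum_int p]
  congr 1
  refine sum_congr rfl fun p _ => ?_
  rw [integral_finsetSum _ fun n _ => (hint n).const_mul _]
  refine sum_congr rfl fun n _ => ?_
  rw [integral_const_mul, integral_pow_mul_exp_neg_mul_gammaMeasure hD (by positivity)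
    (by positivity), poisson_mul_gamma_moment_eq hθZ hθL hx]
end

section
/- For independent gamma random variables and x ≥ 0: the conditional expectation computation ∫₀^∞ [1 − exp(−a(l+1)) Σ_{k=0}^{N−1} (a(l+1))^k/k!] · l^{D−1} exp(−l/θ)/(Γ(D)θ^D) dl = 1 − Σ_{m=0}^{N−1} Σ_{n=0}^{N−1−m} [a^{m+n} exp(−a)/(m!n!)] · θ^n Γ(n+D)/(Γ(D)(aθ+1)^{n+D}), for a ≥ 0, θ > 0, D > 0, integer N ≥ 1. -/
open MeasureTheory Finset Real

lemma integrableOn_rpow_exp_aux {p r : ℝ} (hp : 0 < p) (hr : 0 < r) :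
    IntegrableOn (fun t : ℝ => t ^ (p - 1) * Real.exp (-(r * t))) (Set.Ioi 0) := by
  have h0 := Real.GammaIntegral_convergent hp
  have h1 : IntegrableOn (fun t : ℝ => Real.exp (-(r * t)) * (r * t) ^ (p - 1)) (Set.Ioi 0) := by
    have h := (MeasureTheory.integrableOn_Ioi_comp_mul_left_iff
      (fun x : ℝ => Real.exp (-x) * x ^ (p - 1)) 0 hr).2
    simpa using h (by simpa using h0)
  have h2 := h1.const_mul (r ^ (1 - p))
  refine MeasureTheory.IntegrableOn.congr_fun h2 (fun t ht => ?_) measurableSet_Ioi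
  have ht' : (0:ℝ) < t := ht
  rw [Real.mul_rpow hr.le ht'.le,
    show r ^ (1-p) * (Real.exp (-(r*t)) * (r ^ (p-1) * t ^ (p-1)))
      = (r ^ (1-p) * r ^ (p-1)) * (t ^ (p-1) * Real.exp (-(r*t))) from by ring,
    ← Real.rpow_add hr]
  norm_num

lemma sum_reindex_aux (N : ℕ) (T : ℕ → ℕ → ℝ) :
    ∑ m ∈ range N, ∑ n ∈ range (N - m), T m n
      = ∑ k ∈ range N, ∑ n ∈ range (k + 1), T (k - n) n := by
  rw [Finset.sum_sigma', Finset.sum_sigma']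
  refine Finset.sum_nbij' (fun p => ⟨p.1 + p.2, p.2⟩) (fun p => ⟨p.1 - p.2, p.2⟩)
    ?_ ?_ ?_ ?_ ?_
  · rintro ⟨m, n⟩ h
    simp only [Finset.mem_sigma, Finset.mem_range] at h ⊢
    omega
  · rintro ⟨k, n⟩ h
    simp only [Finset.mem_sigma, Finset.mem_range] at h ⊢
    omega
  · rintro ⟨m, n⟩ h
    simp
  · rintro ⟨k, n⟩ h
    simp only [Finset.mem_sigma, Finset.mem_range] at h
    simp only [Sigma.mk.inj_iff, heq_eq_eq, and_true]
    omega
  · rintro ⟨m, n⟩ h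
    simp

/-- Fully-explicit integral evaluation underlying Lemma 2 of the paper. -/
theorem gamma_mixture_integral
    (N : ℕ) (hN : 1 ≤ N) (D θ a : ℝ) (hD : 0 < D) (hθ : 0 < θ) (ha : 0 ≤ a) :
    ∫ l in Set.Ioi (0 : ℝ),
        (1 - Real.exp (-(a * (l + 1))) * ∑ k ∈ range N, (a * (l + 1)) ^ k / (k.factorial : ℝ))
          * (l ^ (D - 1) * Real.exp (-l / θ) / (Real.Gamma D * θ ^ D))
      = 1 - ∑ m ∈ range N, ∑ n ∈ range (N - m),
          (a ^ (m + n) * Real.exp (-a) / ((m.factorial : ℝ) * n.factorial))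
            * (θ ^ n * Real.Gamma ((n : ℝ) + D)
                / (Real.Gamma D * (a * θ + 1) ^ ((n : ℝ) + D))) := by
  have hΓ : 0 < Real.Gamma D := Real.Gamma_pos_of_pos hD
  have hθD : 0 < θ ^ D := Real.rpow_pos_of_pos hθ D
  have hZ : 0 < Real.Gamma D * θ ^ D := mul_pos hΓ hθD
  set b : ℝ := a + 1/θ with hbdef
  have hb : 0 < b := by positivity
  -- pointwise rewriting of the integrand on `Ioi 0`
  have hpoint : ∀ l ∈ Set.Ioi (0:ℝ),
      (1 - Real.exp (-(a * (l + 1))) * ∑ k ∈ range N, (a * (l + 1)) ^ k / (k.factorial : ℝ))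
          * (l ^ (D - 1) * Real.exp (-l / θ) / (Real.Gamma D * θ ^ D))
        = (1 / (Real.Gamma D * θ ^ D)) * (l ^ (D - 1) * Real.exp (-((1/θ) * l)))
          - ∑ k ∈ range N, ∑ n ∈ range (k + 1),
              (Real.exp (-a) * a ^ k / ((n.factorial : ℝ) * (k - n).factorial)
                  / (Real.Gamma D * θ ^ D))
                * (l ^ ((n:ℝ) + D - 1) * Real.exp (-(b * l))) := by
    intro l hl
    have hl' : (0:ℝ) < l := hl
    have hk : ∀ k : ℕ,
        (∑ n ∈ range (k + 1),
            (Real.exp (-a) * a ^ k / ((n.factorial : ℝ) * (k - n).factorial)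
                / (Real.Gamma D * θ ^ D))
              * (l ^ ((n:ℝ) + D - 1) * Real.exp (-(b * l))))
          = Real.exp (-(a * (l + 1))) * ((a * (l + 1)) ^ k / (k.factorial : ℝ))
            * (l ^ (D - 1) * Real.exp (-l / θ) / (Real.Gamma D * θ ^ D)) := by
      intro k
      rw [mul_pow, add_pow, Finset.mul_sum, Finset.sum_div, Finset.mul_sum, Finset.sum_mul]
      refine Finset.sum_congr rfl fun n hn => ?_
      have hn' : n ≤ k := Nat.lt_succ_iff.mp (Finset.mem_range.mp hn)
      have hfact : ((k.factorial : ℝ)) = (k.choose n : ℝ) * n.factorial * (k - n).factorial := by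
        exact_mod_cast (Nat.choose_mul_factorial_mul_factorial hn').symm
      have hrw1 : l ^ ((n:ℝ) + D - 1) = l ^ n * l ^ (D - 1) := by
        rw [show (n:ℝ) + D - 1 = (n:ℝ) + (D - 1) by ring, Real.rpow_add hl',
          Real.rpow_natCast]
      have hrw2 : Real.exp (-(b * l)) = Real.exp (-(a * l)) * Real.exp (-l / θ) := by
        rw [← Real.exp_add]
        congr 1
        rw [hbdef]
        field_simp
        ring
      have hrw3 : Real.exp (-(a * (l + 1))) = Real.exp (-a) * Real.exp (-(a * l)) := by
        rw [← Real.exp_add]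
        congr 1
        ring
      rw [hrw1, hrw2, hrw3, hfact]
      have h1 : (n.factorial : ℝ) ≠ 0 := Nat.cast_ne_zero.mpr n.factorial_ne_zero
      have h2 : ((k - n).factorial : ℝ) ≠ 0 := Nat.cast_ne_zero.mpr (k-n).factorial_ne_zero
      have h3 : (k.choose n : ℝ) ≠ 0 := Nat.cast_ne_zero.mpr (Nat.choose_pos hn').ne'
      field_simp
      ring
    rw [sub_mul, one_mul, Finset.mul_sum, Finset.sum_mul]
    have hexp : Real.exp (-l / θ) = Real.exp (-((1/θ) * l)) := by
      congr 1
      ring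
    rw [hexp]
    congr 1
    · field_simp
    · exact Finset.sum_congr rfl fun k _ => by rw [hk k, hexp]
  rw [MeasureTheory.setIntegral_congr_fun measurableSet_Ioi hpoint]
  have hGint : ∀ n : ℕ,
      IntegrableOn (fun l : ℝ => l ^ ((n:ℝ) + D - 1) * Real.exp (-(b * l))) (Set.Ioi 0) :=
    fun n => integrableOn_rpow_exp_aux (by positivity) hb
  have hPint : IntegrableOn (fun l : ℝ => l ^ (D - 1) * Real.exp (-((1/θ) * l))) (Set.Ioi 0) :=
    integrableOn_rpow_exp_aux hD (by positivity)
  have hsumint : Integrable (fun l : ℝ => ∑ k ∈ range N, ∑ n ∈ range (k + 1),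
      (Real.exp (-a) * a ^ k / ((n.factorial : ℝ) * (k - n).factorial)
          / (Real.Gamma D * θ ^ D))
        * (l ^ ((n:ℝ) + D - 1) * Real.exp (-(b * l))))
      (volume.restrict (Set.Ioi 0)) :=
    integrable_finset_sum _ fun k _ => integrable_finset_sum _ fun n _ => (hGint n).const_mul _
  rw [MeasureTheory.integral_sub (hPint.const_mul _) hsumint,
    MeasureTheory.integral_const_mul,
    Real.integral_rpow_mul_exp_neg_mul_Ioi hD (by positivity : (0:ℝ) < 1/θ),
    MeasureTheory.integral_finset_sum _
      (fun k _ => integrable_finset_sum _ fun n _ => (hGint n).const_mul _)]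
  have hswap : ∀ k ∈ range N,
      (∫ l in Set.Ioi (0:ℝ), ∑ n ∈ range (k + 1),
          (Real.exp (-a) * a ^ k / ((n.factorial : ℝ) * (k - n).factorial)
              / (Real.Gamma D * θ ^ D))
            * (l ^ ((n:ℝ) + D - 1) * Real.exp (-(b * l))))
        = ∑ n ∈ range (k + 1),
            (Real.exp (-a) * a ^ k / ((n.factorial : ℝ) * (k - n).factorial)
                / (Real.Gamma D * θ ^ D))
              * ((1 / b) ^ ((n:ℝ) + D) * Real.Gamma ((n:ℝ) + D)) := by
    intro k _
    rw [MeasureTheory.integral_finset_sum _ fun n _ => (hGint n).const_mul _]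
    exact Finset.sum_congr rfl fun n _ => by
      rw [MeasureTheory.integral_const_mul,
        Real.integral_rpow_mul_exp_neg_mul_Ioi (by positivity : (0:ℝ) < (n:ℝ) + D) hb]
  rw [Finset.sum_congr rfl hswap, one_div_one_div,
    sum_reindex_aux N (fun m n =>
      (a ^ (m + n) * Real.exp (-a) / ((m.factorial : ℝ) * n.factorial))
        * (θ ^ n * Real.Gamma ((n : ℝ) + D)
            / (Real.Gamma D * (a * θ + 1) ^ ((n : ℝ) + D))))]
  have hfirst : 1 / (Real.Gamma D * θ ^ D) * (θ ^ D * Real.Gamma D) = 1 := by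
    field_simp
  rw [hfirst]
  congr 1
  refine Finset.sum_congr rfl fun k _ => Finset.sum_congr rfl fun n hn => ?_
  have hn' : n ≤ k := Nat.lt_succ_iff.mp (Finset.mem_range.mp hn)
  have hkn : k - n + n = k := Nat.sub_add_cancel hn'
  rw [hkn]
  have haθ : (0:ℝ) < a * θ + 1 := by positivity
  have h1b : (1:ℝ)/b = θ / (a*θ+1) := by
    rw [hbdef, div_eq_div_iff (by positivity : (0:ℝ) < a + 1/θ).ne' haθ.ne']
    field_simp
  have hpow : ((1:ℝ)/b) ^ ((n:ℝ)+D) = θ ^ n * θ ^ D / (a*θ+1) ^ ((n:ℝ)+D) := by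
    rw [h1b, Real.div_rpow hθ.le haθ.le, Real.rpow_add hθ, Real.rpow_natCast]
  rw [hpow]
  have h1 : (n.factorial : ℝ) ≠ 0 := Nat.cast_ne_zero.mpr n.factorial_ne_zero
  have h2 : ((k - n).factorial : ℝ) ≠ 0 := Nat.cast_ne_zero.mpr (k-n).factorial_ne_zero
  have h3 : ((a*θ+1) ^ ((n:ℝ)+D)) ≠ 0 := (Real.rpow_pos_of_pos haθ _).ne'
  field_simp
end
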